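/- arXiv:1210.5325 — 2 statements merged into one kernel-verified Lean document; each statement's English description precedes it below -/
import Mathlib

section
/- Let G and H be additive commutative groups, ψ: G → H a surjective group homomorphism with finite kernel, and R a G-graded commutative ring. If R is steady (every small G-graded R-module is finitely generated), then the ψ-coarsening R_[ψ] is steady (every small H-graded R_[ψ]-module is finitely generated). -/
/-!
Common vocabulary: internally graded rings and modules, coarsening of gradings,
graded morphisms, and derived notions (injectivity, cogenerators, smallness, ...),
following Rohrer, "Coarsenings, injectives and Hom functors".
-/

open DirectSum

section Defs

variable {G H R : Type} [AddCommGroup G] [AddCommGroup H] [CommRing R]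

/-- The `ψ`-coarsening of a `G`-grading: `(ℳ_[ψ])_h = ⨁_{g ∈ ψ⁻¹(h)} ℳ_g`. -/
def coarsen {M : Type} [AddCommGroup M] (ψ : G →+ H) (ℳ : G → AddSubgroup M) (h : H) :
    AddSubgroup M :=
  ⨆ g ∈ ψ ⁻¹' {h}, ℳ g

/-- `(R, 𝒜)` is a `G`-graded commutative ring: the `𝒜 g` are additive subgroups whose
internal direct sum is `R`, and `𝒜 g * 𝒜 h ⊆ 𝒜 (g + h)`. -/
def IsGradedRing (𝒜 : G → AddSubgroup R) : Prop :=
  (1 : R) ∈ 𝒜 0 ∧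
  (∀ {g h : G} {a b : R}, a ∈ 𝒜 g → b ∈ 𝒜 h → a * b ∈ 𝒜 (g + h)) ∧
  (letI := Classical.decEq G; DirectSum.IsInternal 𝒜)

/-- `(M, ℳ)` is a `G`-graded module over the `G`-graded ring `(R, 𝒜)`. -/
def IsGradedModule {M : Type} [AddCommGroup M] [Module R M]
    (𝒜 : G → AddSubgroup R) (ℳ : G → AddSubgroup M) : Prop :=
  (∀ {g h : G} {r : R} {m : M}, r ∈ 𝒜 g → m ∈ ℳ h → r • m ∈ ℳ (g + h)) ∧
  (letI := Classical.decEq G; DirectSum.IsInternal ℳ)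

/-- A morphism of `G`-graded `R`-modules is an `R`-linear map respecting the gradings. -/
def IsGradedHom {M N : Type} [AddCommGroup M] [Module R M]
    [AddCommGroup N] [Module R N] (ℳ : G → AddSubgroup M) (𝒩 : G → AddSubgroup N)
    (f : M →ₗ[R] N) : Prop :=
  ∀ g : G, ∀ m ∈ ℳ g, f m ∈ 𝒩 g

/-- The grading of a direct sum of graded modules:
`(⨁_i N_i)_g` consists of the elements all of whose components lie in degree `g`. -/
def directSumGrading {ι : Type} {M : ι → Type}
    [∀ i, AddCommGroup (M i)] (ℳ : ∀ i, G → AddSubgroup (M i)) (g : G) :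
    AddSubgroup (⨁ i, M i) where
  carrier := {x | ∀ i, x i ∈ ℳ i g}
  zero_mem' := fun i => by simp only [DirectSum.zero_apply, ZeroMemClass.zero_mem]
  add_mem' := fun {x y} hx hy i => by
    rw [DirectSum.add_apply]; exact add_mem (hx i) (hy i)
  neg_mem' := fun {x} hx i => by
    rw [DFinsupp.neg_apply]; exact neg_mem (hx i)

/-- `(E, ℰ)` is an injective object of the category of `G`-graded `R`-modules:
every graded morphism into `E` extends along every injective graded morphism. -/
def IsInjectiveGradedModule (𝒜 : G → AddSubgroup R) {E : Type} [AddCommGroup E] [Module R E]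
    (ℰ : G → AddSubgroup E) : Prop :=
  ∀ (A B : Type) [AddCommGroup A] [Module R A] [AddCommGroup B] [Module R B],
    ∀ (𝒮A : G → AddSubgroup A) (𝒮B : G → AddSubgroup B),
      IsGradedModule 𝒜 𝒮A → IsGradedModule 𝒜 𝒮B →
      ∀ i : A →ₗ[R] B, Function.Injective i → IsGradedHom 𝒮A 𝒮B i →
      ∀ f : A →ₗ[R] E, IsGradedHom 𝒮A ℰ f →
      ∃ g : B →ₗ[R] E, IsGradedHom 𝒮B ℰ g ∧ g ∘ₗ i = f

/-- `(M, ℳ)` is a cogenerator of the category of `G`-graded `R`-modules: every nonzero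
graded morphism is detected by a graded morphism into `M`. -/
def IsCogenerator (𝒜 : G → AddSubgroup R) {M : Type} [AddCommGroup M] [Module R M]
    (ℳ : G → AddSubgroup M) : Prop :=
  ∀ (N N' : Type) [AddCommGroup N] [Module R N] [AddCommGroup N'] [Module R N'],
    ∀ (𝒩 : G → AddSubgroup N) (𝒩' : G → AddSubgroup N'),
      IsGradedModule 𝒜 𝒩 → IsGradedModule 𝒜 𝒩' →
      ∀ u : N →ₗ[R] N', IsGradedHom 𝒩 𝒩' u → u ≠ 0 →
      ∃ v : N' →ₗ[R] M, IsGradedHom 𝒩' ℳ v ∧ v ∘ₗ u ≠ 0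

/-- `M` is a small graded module: every graded morphism from `M` into a direct sum of
graded modules factors through a finite sub-sum. -/
def IsSmall (𝒜 : G → AddSubgroup R) {M : Type} [AddCommGroup M] [Module R M]
    (ℳ : G → AddSubgroup M) : Prop :=
  ∀ (ι : Type) (N : ι → Type) [∀ i, AddCommGroup (N i)] [∀ i, Module R (N i)],
    ∀ (𝒩 : ∀ i, G → AddSubgroup (N i)), (∀ i, IsGradedModule 𝒜 (𝒩 i)) →
      ∀ f : M →ₗ[R] ⨁ i, N i, IsGradedHom ℳ (directSumGrading 𝒩) f →
        ∃ s : Finset ι, ∀ (m : M) (i : ι), i ∉ s → f m i = 0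

/-- `M` is `P`-small: every graded morphism from `M` into a direct sum of copies of `P`
factors through a finite sub-sum. -/
def IsSmallWrt {P : Type} [AddCommGroup P] [Module R P] (𝒬 : G → AddSubgroup P)
    {M : Type} [AddCommGroup M] [Module R M] (ℳ : G → AddSubgroup M) : Prop :=
  ∀ (ι : Type) (f : M →ₗ[R] ⨁ (_ : ι), P),
    IsGradedHom ℳ (directSumGrading fun (_ : ι) => 𝒬) f →
      ∃ s : Finset ι, ∀ (m : M) (i : ι), i ∉ s → f m i = 0

/-- A `G`-graded ring is steady if all small graded modules over it are finitely generated. -/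
def IsSteady (𝒜 : G → AddSubgroup R) : Prop :=
  ∀ (M : Type) [AddCommGroup M] [Module R M], ∀ ℳ : G → AddSubgroup M,
    IsGradedModule 𝒜 ℳ → IsSmall 𝒜 ℳ → Module.Finite R M

/-- A graded ideal of the `G`-graded ring `(R, 𝒜)`: `I = ⨁_g (I ∩ R_g)`. -/
def IsGradedIdeal (𝒜 : G → AddSubgroup R) (I : Ideal R) : Prop :=
  I.toAddSubgroup = ⨆ g : G, I.toAddSubgroup ⊓ 𝒜 g

/-- A simple `G`-graded `R`-module: nonzero, and its only graded submodules are `0` and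
the whole module. -/
def IsSimpleGradedModule (𝒜 : G → AddSubgroup R) {S : Type} [AddCommGroup S] [Module R S]
    (𝒮 : G → AddSubgroup S) : Prop :=
  IsGradedModule 𝒜 𝒮 ∧ Nontrivial S ∧
    ∀ P : Submodule R S, (P.toAddSubgroup = ⨆ g : G, P.toAddSubgroup ⊓ 𝒮 g) →
      P = ⊥ ∨ P = ⊤

/-- The subgroup of `M →ₗ[R] N` consisting of the graded morphisms `M → N(g)`, i.e. the
degree-`g` component of the graded Hom module `⨁HOM(M, N)`. -/
def gradedHomSubgroup {M N : Type} [AddCommGroup M] [Module R M] [AddCommGroup N] [Module R N]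
    (ℳ : G → AddSubgroup M) (𝒩 : G → AddSubgroup N) (g : G) : AddSubgroup (M →ₗ[R] N) where
  carrier := {u | ∀ g' : G, ∀ m ∈ ℳ g', u m ∈ 𝒩 (g + g')}
  zero_mem' := fun g' m _ => by simp only [LinearMap.zero_apply, ZeroMemClass.zero_mem]
  add_mem' := fun {u v} hu hv g' m hm => by
    rw [LinearMap.add_apply]; exact add_mem (hu g' m hm) (hv g' m hm)
  neg_mem' := fun {u} hu g' m hm => by
    rw [LinearMap.neg_apply]; exact neg_mem (hu g' m hm)

end Defs

/-!
Write `ψ^* M = ⨁_{g ∈ G} M_{ψ g}` for an `H`-graded `R_[ψ]`-module `M`: it is a `G`-graded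
`R`-module in which `r ∈ R_a` sends the summand at `g` to the summand at `a + g`. Summing the
components is an `R`-linear surjection `ψ^* M → M` because `ψ` is onto, so it suffices that
`ψ^* M` is finitely generated, i.e. (as `R` is steady) small. The fibres of `ψ` are cosets of the
finite group `ker ψ`, so `m ∈ M_h ↦ ∑_{ψ g = h} m` is a graded map `M → (ψ^* M)_[ψ]`. A graded map
`u` out of `ψ^* M` vanishes as soon as its composite with this map does, because the terms of
`∑_{ψ g = h} u m` have pairwise distinct degrees; so smallness of `M` bounds the support of every
graded map out of `ψ^* M`.
-/

theorem DirectSum.IsInternal.addSubgroup_iSup_eq_top {ι X : Type} [DecidableEq ι] [AddCommGroup X]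
    {𝒩 : ι → AddSubgroup X} (h : IsInternal 𝒩) : iSup 𝒩 = ⊤ := by
  refine (AddSubgroup.eq_top_iff' _).2 fun x => ?_
  obtain ⟨y, rfl⟩ := h.2 x
  induction y using DirectSum.induction_on with
  | zero => rw [map_zero]; exact zero_mem _
  | of i y => rw [DirectSum.coeAddMonoidHom_of]; exact AddSubgroup.mem_iSup_of_mem i y.2
  | add y z hy hz => rw [map_add]; exact add_mem hy hz

theorem DirectSum.IsInternal.eq_zero_of_sum_eq_zero {ι X κ : Type} [DecidableEq ι] [AddCommGroup X]
    {𝒩 : ι → AddSubgroup X} (h : IsInternal 𝒩) [Fintype κ] {d : κ → ι} (hd : d.Injective)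
    {t : κ → X} (ht : ∀ k, t k ∈ 𝒩 (d k)) (hsum : ∑ k, t k = 0) (k : κ) : t k = 0 := by
  let := h.chooseDecomposition
  have hk := congrArg (fun x => (decompose 𝒩 x (d k) : X)) hsum
  simp only [decompose_sum, decompose_zero, zero_apply, ZeroMemClass.coe_zero] at hk
  rw [DFinsupp.finsetSum_apply, AddSubgroup.val_finsetSum] at hk
  rwa [Finset.sum_eq_single_of_mem k (Finset.mem_univ k)
    (fun j _ hj => decompose_of_mem_ne 𝒩 (ht j) (hd.ne hj)), decompose_of_mem_same 𝒩 (ht k)] at hk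

theorem DirectSum.isInternal_range_of {ι : Type} [DecidableEq ι] {β : ι → Type}
    [∀ i, AddCommGroup (β i)] : IsInternal fun i => (of β i).range := by
  let Φ : (⨁ i, β i) →+ ⨁ i, (of β i).range :=
    toAddMonoid fun i => (of (fun i => (of β i).range) i).comp (of β i).rangeRestrict
  refine Function.bijective_iff_has_inverse.2 ⟨Φ, fun y => ?_, fun x => ?_⟩
  · induction y using DirectSum.induction_on with
    | zero => simp
    | of i y =>
      obtain ⟨_, b, rfl⟩ := y
      rw [coeAddMonoidHom_of]
      exact toAddMonoid_of _ _ _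
    | add y z hy hz => rw [map_add, map_add, hy, hz]
  · induction x using DirectSum.induction_on with
    | zero => simp
    | of i b => simp [Φ]
    | add y z hy hz => rw [map_add, map_add, hy, hz]

theorem AddMonoidHom.finite_fiber {G H : Type} [AddCommGroup G] [AddCommGroup H] {ψ : G →+ H}
    [Finite ψ.ker] (h : H) : Finite {g // ψ g = h} := by
  rcases isEmpty_or_nonempty {g // ψ g = h} with _ | ⟨g₀, hg₀⟩
  · infer_instance
  · refine Finite.of_injective (fun g => (⟨g.1 - g₀, by simp [g.2, hg₀]⟩ : ψ.ker)) ?_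
    intro g g' hgg'
    exact Subtype.ext (sub_left_inj.1 (congrArg Subtype.val hgg'))

theorem AddMonoidHom.map_smul_of_homogeneous {ι κ R N P : Type} [Ring R] [AddCommGroup N]
    [Module R N] [AddCommGroup P] [Module R P] (f : N →+ P) {𝒜 : ι → AddSubgroup R}
    (h𝒜 : iSup 𝒜 = ⊤) {𝒩 : κ → AddSubgroup N} (h𝒩 : iSup 𝒩 = ⊤)
    (hf : ∀ i j (r : R) (x : N), r ∈ 𝒜 i → x ∈ 𝒩 j → f (r • x) = r • f x) (r : R) (x : N) :
    f (r • x) = r • f x := by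
  have hr : r ∈ iSup 𝒜 := h𝒜 ▸ AddSubgroup.mem_top r
  have hx : x ∈ iSup 𝒩 := h𝒩 ▸ AddSubgroup.mem_top x
  refine AddSubgroup.iSup_induction 𝒜 (C := fun r => f (r • x) = r • f x) hr ?_ ?_ ?_
  · intro i r hr
    refine AddSubgroup.iSup_induction 𝒩 (C := fun x => f (r • x) = r • f x) hx ?_ ?_ ?_
    · exact fun j x hx => hf i j r x hr hx
    · rw [smul_zero, map_zero, smul_zero]
    · intro x y hx hy
      rw [smul_add, map_add, map_add, hx, hy, smul_add]
  · rw [zero_smul, map_zero, zero_smul]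
  · intro r s hr hs
    rw [add_smul, map_add, hr, hs, add_smul]

section Coarsen

variable {G H X : Type} [AddCommGroup G] [AddCommGroup H] [AddCommGroup X] {ψ : G →+ H}
  {𝒩 : G → AddSubgroup X}

theorem mem_coarsen_of_mem {g : G} {h : H} (hg : ψ g = h) {x : X} (hx : x ∈ 𝒩 g) :
    x ∈ coarsen ψ 𝒩 h :=
  le_iSup₂ (f := fun g' (_ : g' ∈ ψ ⁻¹' {h}) => 𝒩 g') g hg hx

@[elab_as_elim]
theorem coarsen_induction {h : H} {C : ∀ x, x ∈ coarsen ψ 𝒩 h → Prop}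
    (mem : ∀ g (hg : ψ g = h) x (hx : x ∈ 𝒩 g), C x (mem_coarsen_of_mem hg hx))
    (zero : C 0 (zero_mem _))
    (add : ∀ x y hx hy, C x hx → C y hy → C (x + y) (add_mem hx hy))
    {x : X} (hx : x ∈ coarsen ψ 𝒩 h) : C x hx := by
  have hsup : coarsen ψ 𝒩 h = ⨆ g : ψ ⁻¹' {h}, 𝒩 g := by rw [coarsen, iSup_subtype']
  suffices ∀ x (hx : x ∈ ⨆ g : ψ ⁻¹' {h}, 𝒩 g), C x (hsup ▸ hx) from this x (hsup ▸ hx)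
  intro x hx
  induction hx using AddSubgroup.iSup_induction' with
  | hp g x hx => exact mem g g.2 x hx
  | h1 => exact zero
  | hadd x y _ _ ihx ihy => exact add x y _ _ ihx ihy

theorem isInternal_coarsen [DecidableEq G] [DecidableEq H] (h𝒩 : IsInternal 𝒩) :
    IsInternal (coarsen ψ 𝒩) := by
  let Φ : (⨁ g, 𝒩 g) →+ ⨁ h, coarsen ψ 𝒩 h :=
    toAddMonoid fun g => (of (fun h => coarsen ψ 𝒩 h) (ψ g)).comp
      (AddSubgroup.inclusion fun _ => mem_coarsen_of_mem rfl)
  have hΦ : (DirectSum.coeAddMonoidHom (coarsen ψ 𝒩)).comp Φ = DirectSum.coeAddMonoidHom 𝒩 := by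
    ext g x
    simp [Φ]
  have hΦ_surj : Function.Surjective Φ := by
    intro y
    induction y using DirectSum.induction_on with
    | zero => exact ⟨0, map_zero Φ⟩
    | of h x =>
      obtain ⟨x, hx⟩ := x
      refine coarsen_induction (C := fun x hx => ∃ u, Φ u = of _ h ⟨x, hx⟩) ?_ ?_ ?_ hx
      · intro g hg y hy
        cases hg
        exact ⟨of _ g ⟨y, hy⟩, toAddMonoid_of _ _ _⟩
      · exact ⟨0, by rw [map_zero]; exact (map_zero _).symm⟩
      · rintro x y hx hy ⟨u, hu⟩ ⟨v, hv⟩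
        exact ⟨u + v, by rw [map_add, hu, hv, ← map_add]; rfl⟩
    | add x y hx hy =>
      obtain ⟨u, rfl⟩ := hx
      obtain ⟨v, rfl⟩ := hy
      exact ⟨u + v, map_add Φ u v⟩
  have hcomp : ⇑(DirectSum.coeAddMonoidHom (coarsen ψ 𝒩)) ∘ Φ = DirectSum.coeAddMonoidHom 𝒩 :=
    congrArg DFunLike.coe hΦ
  exact ⟨(hcomp ▸ h𝒩.1).of_comp_right hΦ_surj, (hcomp ▸ h𝒩.2).of_comp⟩

theorem IsGradedHom.coarsen {R Y : Type} [CommRing R] [Module R X] [AddCommGroup Y] [Module R Y]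
    {𝒬 : G → AddSubgroup Y} {f : X →ₗ[R] Y} (hf : IsGradedHom 𝒩 𝒬 f) :
    IsGradedHom (coarsen ψ 𝒩) (coarsen ψ 𝒬) f := by
  intro h x hx
  induction hx using coarsen_induction with
  | mem g hg x hx => exact mem_coarsen_of_mem hg (hf g x hx)
  | zero => rw [map_zero]; exact zero_mem _
  | add x y _ _ ihx ihy => rw [map_add]; exact add_mem ihx ihy

theorem IsGradedModule.coarsen {R : Type} [CommRing R] [Module R X] {𝒜 : G → AddSubgroup R}
    (h : IsGradedModule 𝒜 𝒩) : IsGradedModule (coarsen ψ 𝒜) (coarsen ψ 𝒩) := by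
  refine ⟨fun {h₁ h₂ r x} hr hx => ?_, by classical exact isInternal_coarsen h.2⟩
  induction hr using coarsen_induction with
  | mem g₁ hg₁ r hr =>
    induction hx using coarsen_induction with
    | mem g₂ hg₂ x hx =>
      exact mem_coarsen_of_mem (by rw [map_add, hg₁, hg₂]) (h.1 hr hx)
    | zero => rw [smul_zero]; exact zero_mem _
    | add x y _ _ ihx ihy => rw [smul_add]; exact add_mem ihx ihy
  | zero => rw [zero_smul]; exact zero_mem _
  | add r s _ _ ihr ihs => rw [add_smul]; exact add_mem ihr ihs

end Coarsen

section Pullback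

variable {G H M : Type} [AddCommGroup G] [AddCommGroup H] [AddCommGroup M] [DecidableEq G]
  (ψ : G →+ H) (ℳ : H → AddSubgroup M)

/-- The `G`-grading of `ψ^* M = ⨁_g M_{ψ g}` by its summands. -/
def pullbackGrading (g : G) : AddSubgroup (⨁ g : G, ℳ (ψ g)) :=
  (of (fun g => ℳ (ψ g)) g).range

theorem isInternal_pullbackGrading : IsInternal (pullbackGrading ψ ℳ) :=
  isInternal_range_of

variable {ψ ℳ} in
theorem coeAddMonoidHom_pullback_surjective [DecidableEq H] [Decomposition ℳ]
    (hψ : Function.Surjective ψ) :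
    Function.Surjective (DirectSum.coeAddMonoidHom fun g => ℳ (ψ g)) := by
  rw [← AddMonoidHom.range_eq_top, eq_top_iff,
    ← (Decomposition.isInternal ℳ).addSubgroup_iSup_eq_top, iSup_le_iff]
  intro h m hm
  obtain ⟨g, rfl⟩ := hψ h
  exact ⟨of _ g ⟨m, hm⟩, coeAddMonoidHom_of _ _ _⟩

variable [DecidableEq H] [Decomposition ℳ] [∀ h, Fintype {g // ψ g = h}]

/-- The unit `M → (ψ^* M)_[ψ]` of the adjunction `ψ^* ⊣ (·)_[ψ]`, which exists because the fibres
of `ψ` are finite. -/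
def pullbackUnit : M →+ ⨁ g : G, ℳ (ψ g) :=
  (toAddMonoid fun h => ∑ g : {g // ψ g = h},
    (of (fun g => ℳ (ψ g)) g).comp (AddSubgroup.inclusion (congrArg ℳ g.2).ge)).comp
    (decomposeAddEquiv ℳ).toAddMonoidHom

variable {ψ ℳ}

theorem pullbackUnit_of_mem {h : H} {m : M} (hm : m ∈ ℳ h) :
    pullbackUnit ψ ℳ m =
      ∑ g : {g // ψ g = h}, of (fun g => ℳ (ψ g)) g ⟨m, (congrArg ℳ g.2).ge hm⟩ := by
  simp only [pullbackUnit, AddMonoidHom.comp_apply, AddEquiv.coe_toAddMonoidHom,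
    decomposeAddEquiv_apply, decompose_of_mem ℳ hm, toAddMonoid_of, AddMonoidHom.finsetSum_apply]
  rfl

theorem pullbackUnit_mem_coarsen {h : H} {m : M} (hm : m ∈ ℳ h) :
    pullbackUnit ψ ℳ m ∈ coarsen ψ (pullbackGrading ψ ℳ) h := by
  rw [pullbackUnit_of_mem hm]
  exact sum_mem fun g _ => mem_coarsen_of_mem g.2 ⟨_, rfl⟩

theorem eq_zero_of_forall_pullbackUnit_eq_zero {P : Type} [AddCommGroup P]
    {𝒬 : G → AddSubgroup P} (h𝒬 : IsInternal 𝒬) {f : (⨁ g : G, ℳ (ψ g)) →+ P}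
    (hf : ∀ g m, f (of (fun g => ℳ (ψ g)) g m) ∈ 𝒬 g) (hf₀ : ∀ m, f (pullbackUnit ψ ℳ m) = 0) :
    f = 0 := by
  refine DirectSum.addHom_ext fun g m => ?_
  have hsum := hf₀ m
  rw [pullbackUnit_of_mem m.2, map_sum] at hsum
  exact h𝒬.eq_zero_of_sum_eq_zero Subtype.val_injective (fun g' => hf _ _) hsum ⟨g, rfl⟩

end Pullback

section PullbackModule

-- `IsGradedModule` and `IsSmall` use `Classical.decEq` on the degrees, so this section works with
-- classical decidability throughout.
open scoped Classical

variable {G H R M : Type} [AddCommGroup G] [AddCommGroup H] [CommRing R] [AddCommGroup M]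
  [Module R M] {ψ : G →+ H} {ℳ : H → AddSubgroup M} {𝒜 : G → AddSubgroup R}
  [GradedRing 𝒜] [SetLike.GradedSMul (coarsen ψ 𝒜) ℳ]

instance : SetLike.GradedSMul 𝒜 fun g => ℳ (ψ g) :=
  ⟨fun _ _ _ _ hr hm => by
    rw [vadd_eq_add, map_add]
    exact SetLike.GradedSMul.smul_mem (mem_coarsen_of_mem (ψ := ψ) rfl hr) hm⟩

variable (𝒜) in
theorem smul_of_of_mem {a g : G} {r : R} (hr : r ∈ 𝒜 a) (m : ℳ (ψ g)) :
    letI := GradedModule.isModule 𝒜 fun g => ℳ (ψ g)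
    r • of (fun g => ℳ (ψ g)) g m =
      of (fun g => ℳ (ψ g)) (a + g)
        ⟨r • (m : M), SetLike.GradedSMul.smul_mem (B := fun g => ℳ (ψ g)) hr m.2⟩ := by
  show decompose 𝒜 r • of (fun g => ℳ (ψ g)) g m = _
  rw [decompose_of_mem 𝒜 hr, Gmodule.of_smul_of]
  rfl

theorem isGradedModule_pullbackGrading :
    letI := GradedModule.isModule 𝒜 fun g => ℳ (ψ g)
    IsGradedModule 𝒜 (pullbackGrading ψ ℳ) := by
  refine ⟨?_, isInternal_pullbackGrading ψ ℳ⟩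
  rintro a g r _ hr ⟨m, rfl⟩
  exact ⟨_, (smul_of_of_mem 𝒜 hr m).symm⟩

theorem coeAddMonoidHom_pullback_smul (r : R) (x : ⨁ g : G, ℳ (ψ g)) :
    letI := GradedModule.isModule 𝒜 fun g => ℳ (ψ g)
    DirectSum.coeAddMonoidHom (fun g => ℳ (ψ g)) (r • x) =
      r • DirectSum.coeAddMonoidHom (fun g => ℳ (ψ g)) x := by
  let := GradedModule.isModule 𝒜 fun g => ℳ (ψ g)
  refine AddMonoidHom.map_smul_of_homogeneous _
    (Decomposition.isInternal 𝒜).addSubgroup_iSup_eq_top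
    (isInternal_pullbackGrading ψ ℳ).addSubgroup_iSup_eq_top ?_ r x
  rintro a g r _ hr ⟨m, rfl⟩
  rw [smul_of_of_mem 𝒜 hr, coeAddMonoidHom_of, coeAddMonoidHom_of]

theorem module_finite_of_pullback [Decomposition ℳ] (hψ : Function.Surjective ψ) :
    letI := GradedModule.isModule 𝒜 fun g => ℳ (ψ g)
    Module.Finite R (⨁ g : G, ℳ (ψ g)) → Module.Finite R M := by
  let := GradedModule.isModule 𝒜 fun g => ℳ (ψ g)
  intro _
  let counit : (⨁ g : G, ℳ (ψ g)) →ₗ[R] M :=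
    { DirectSum.coeAddMonoidHom fun g => ℳ (ψ g) with map_smul' := coeAddMonoidHom_pullback_smul }
  exact Module.Finite.of_surjective counit (coeAddMonoidHom_pullback_surjective hψ)

variable [Decomposition ℳ] [∀ h, Fintype {g // ψ g = h}]

theorem pullbackUnit_smul (r : R) (m : M) :
    letI := GradedModule.isModule 𝒜 fun g => ℳ (ψ g)
    pullbackUnit ψ ℳ (r • m) = r • pullbackUnit ψ ℳ m := by
  let := GradedModule.isModule 𝒜 fun g => ℳ (ψ g)
  refine AddMonoidHom.map_smul_of_homogeneous _
    (Decomposition.isInternal 𝒜).addSubgroup_iSup_eq_top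
    (Decomposition.isInternal ℳ).addSubgroup_iSup_eq_top ?_ r m
  intro a h r m hr hm
  have hrm : r • m ∈ ℳ (ψ a + h) :=
    SetLike.GradedSMul.smul_mem (mem_coarsen_of_mem (ψ := ψ) rfl hr) hm
  rw [pullbackUnit_of_mem hrm, pullbackUnit_of_mem hm, Finset.smul_sum]
  refine (Fintype.sum_equiv ((Equiv.addLeft a).subtypeEquiv fun g => ?_) _ _ fun g => ?_).symm
  · rw [Equiv.coe_addLeft, map_add, add_right_inj]
  · rw [smul_of_of_mem 𝒜 hr]
    rfl

theorem isSmall_pullbackGrading (hsmall : IsSmall (coarsen ψ 𝒜) ℳ) :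
    letI := GradedModule.isModule 𝒜 fun g => ℳ (ψ g)
    IsSmall 𝒜 (pullbackGrading ψ ℳ) := by
  let := GradedModule.isModule 𝒜 fun g => ℳ (ψ g)
  intro ι N _ _ 𝒩 h𝒩 f hf
  let unit : M →ₗ[R] ⨁ g : G, ℳ (ψ g) :=
    { pullbackUnit ψ ℳ with map_smul' := pullbackUnit_smul }
  have hcomponent : ∀ i, IsGradedHom (pullbackGrading ψ ℳ) (𝒩 i) (component R ι N i ∘ₗ f) :=
    fun i g x hx => hf g x hx i
  obtain ⟨s, hs⟩ := hsmall ι N (fun i => coarsen ψ (𝒩 i)) (fun i => (h𝒩 i).coarsen) (f ∘ₗ unit)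
    fun h m hm i => (hcomponent i).coarsen h _ (pullbackUnit_mem_coarsen hm)
  refine ⟨s, fun x i hi => ?_⟩
  have hzero := eq_zero_of_forall_pullbackUnit_eq_zero (h𝒩 i).2
    (f := (component R ι N i ∘ₗ f).toAddMonoidHom) (fun g m => hcomponent i g _ ⟨m, rfl⟩)
    (fun m => hs m i hi)
  exact DFunLike.congr_fun hzero x

end PullbackModule

/-- **Statement 14** (Proposition, second half): if `ker ψ` is finite and `R` is steady,
then the `ψ`-coarsening `R_[ψ]` is steady. -/
theorem coarsening_steady_of_steady_of_ker_finite
    {G H R : Type} [AddCommGroup G] [AddCommGroup H] [CommRing R]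
    (ψ : G →+ H) (hψ : Function.Surjective ψ) (hfin : Finite ψ.ker)
    (𝒜 : G → AddSubgroup R) (h𝒜 : IsGradedRing 𝒜)
    (hsteady : IsSteady 𝒜) :
    IsSteady (coarsen ψ 𝒜) := by
  classical
  intro M _ _ ℳ hℳ hsmall
  let : GradedRing 𝒜 :=
    { one_mem := h𝒜.1, mul_mem := fun _ _ _ _ => h𝒜.2.1
      toDecomposition := h𝒜.2.2.chooseDecomposition }
  have : SetLike.GradedSMul (coarsen ψ 𝒜) ℳ := ⟨fun _ _ _ _ hr hm => hℳ.1 hr hm⟩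
  let := hℳ.2.chooseDecomposition
  let := fun h => @Fintype.ofFinite {g // ψ g = h} (ψ.finite_fiber h)
  let := GradedModule.isModule 𝒜 fun g => ℳ (ψ g)
  exact module_finite_of_pullback hψ
    (hsteady _ _ isGradedModule_pullbackGrading (isSmall_pullbackGrading hsmall))
end

section
/- Let G and H be additive commutative groups, ψ: G → H a surjective group homomorphism, R a G-graded commutative ring, and M, N G-graded R-modules. If the canonical monomorphism h_ψ(M,N): (⨁HOM^G_R(M,N))_[ψ] → ⨁HOM^H_{R_[ψ]}(M_[ψ], N_[ψ]) is an isomorphism, then the canonical monomorphism λ^M: ⊕_{g∈ker(ψ)} Hom_{GrMod^G(R)}(M, N(g)) → Hom_{GrMod^G(R)}(M, ⊕_{g∈ker(ψ)} N(g)) is an isomorphism; equivalently, every morphism M → ⊕_{g∈ker(ψ)} N(g) of G-graded R-modules factors through ⊕_{g∈E} N(g) for some finite subset E ⊆ ker(ψ). -/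
/-!
Common vocabulary: internally graded rings and modules, coarsening of gradings,
graded morphisms, and derived notions (injectivity, cogenerators, smallness, ...),
following Rohrer, "Coarsenings, injectives and Hom functors".
-/

open DirectSum

/-!
Let `f : M → ⨁_{k ∈ ker ψ} N(k)` be graded and let `u : M → N` be `f` followed by summation.
Since `ψ` kills `ker ψ`, `u` is homogeneous of degree `0` for the coarsened gradings, so by
hypothesis `u` is a finite sum of graded morphisms `v_g : M → N(g)`, `g ∈ S`. For `m ∈ M_g`,
the component `f m k` lies in `N_{k+g}` while `u m` lies in `⨁_{g' ∈ S} N_{g'+g}`; comparing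
homogeneous components of `u m` in the internal direct sum `N` gives `f m k = 0` for `k ∉ S`.
-/

section Coarsening

variable {G H R M N : Type} [AddCommGroup G] [AddCommGroup H] [CommRing R]
  [AddCommGroup M] [Module R M] [AddCommGroup N] [Module R N]

theorem le_coarsen (ψ : G →+ H) (ℳ : G → AddSubgroup M) (g : G) :
    ℳ g ≤ coarsen ψ ℳ (ψ g) :=
  le_iSup₂ (f := fun g' (_ : g' ∈ ψ ⁻¹' {ψ g}) => ℳ g') g rfl

theorem mem_gradedHomSubgroup_coarsen (ψ : G →+ H) (ℳ : G → AddSubgroup M)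
    (𝒩 : G → AddSubgroup N) {h : H} {u : M →ₗ[R] N}
    (hu : ∀ g, ∀ m ∈ ℳ g, u m ∈ coarsen ψ 𝒩 (h + ψ g)) :
    u ∈ gradedHomSubgroup (coarsen ψ ℳ) (coarsen ψ 𝒩) h := by
  intro h' m hm
  have hle : coarsen ψ ℳ h' ≤ (coarsen ψ 𝒩 (h + h')).comap u.toAddMonoidHom := by
    refine iSup₂_le fun g hg m hm => ?_
    simpa [show ψ g = h' from hg] using hu g m hm
  exact hle hm

theorem exists_finset_of_mem_iSup_gradedHomSubgroup (ℳ : G → AddSubgroup M)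
    (𝒩 : G → AddSubgroup N) {u : M →ₗ[R] N} (hu : u ∈ ⨆ g, gradedHomSubgroup ℳ 𝒩 g) :
    ∃ S : Finset G, ∀ g, ∀ m ∈ ℳ g, u m ∈ ⨆ g' ∈ S, 𝒩 (g' + g) := by
  classical
  induction hu using AddSubgroup.iSup_induction' with
  | hp g' v hv => exact ⟨{g'}, fun g m hm => by simpa using hv g m hm⟩
  | h1 => exact ⟨∅, fun _ _ _ => zero_mem _⟩
  | hadd v w _ _ hv hw =>
    obtain ⟨S, hS⟩ := hv
    obtain ⟨T, hT⟩ := hw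
    refine ⟨S ∪ T, fun g m hm => add_mem ?_ ?_⟩
    · exact SetLike.le_def.mp (biSup_mono fun _ => Finset.mem_union_left T) (hS g m hm)
    · exact SetLike.le_def.mp (biSup_mono fun _ => Finset.mem_union_right S) (hT g m hm)

end Coarsening

section SumOfComponents

variable {κ ι R N : Type} [DecidableEq κ] [CommRing R] [AddCommGroup N] [Module R N]

theorem DirectSum.toModule_id_apply [∀ x : N, Decidable (x ≠ 0)]
    (x : ⨁ (_ : κ), N) :
    DirectSum.toModule R κ N (fun _ => LinearMap.id) x = ∑ k ∈ x.support, x k :=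
  DFinsupp.sumAddHom_apply _ x

theorem DirectSum.toModule_id_mem {S : AddSubgroup N} {x : ⨁ (_ : κ), N}
    (hx : ∀ k, x k ∈ S) : DirectSum.toModule R κ N (fun _ => LinearMap.id) x ∈ S := by
  classical
  rw [DirectSum.toModule_id_apply]
  exact sum_mem fun k _ => hx k

theorem DirectSum.apply_eq_zero_of_toModule_id_mem_iSup_ne {𝒩 : ι → AddSubgroup N}
    (h𝒩 : iSupIndep 𝒩) {a : κ → ι} (ha : Function.Injective a) {x : ⨁ (_ : κ), N}
    (hx : ∀ k, x k ∈ 𝒩 (a k)) {k : κ}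
    (hsum : DirectSum.toModule R κ N (fun _ => LinearMap.id) x ∈ ⨆ (j) (_ : j ≠ a k), 𝒩 j) :
    x k = 0 := by
  classical
  by_cases hk₀ : x k = 0
  · exact hk₀
  have hk : k ∈ x.support := DFinsupp.mem_support_iff.mpr hk₀
  have hrest : ∑ k' ∈ x.support.erase k, x k' ∈ ⨆ (j) (_ : j ≠ a k), 𝒩 j :=
    sum_mem fun k' hk' =>
      le_iSup₂ (f := fun j (_ : j ≠ a k) => 𝒩 j) (a k')
        (ha.ne (Finset.ne_of_mem_erase hk')) (hx k')
  rw [DirectSum.toModule_id_apply, ← Finset.add_sum_erase _ _ hk] at hsum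
  have hxk : x k ∈ ⨆ (j) (_ : j ≠ a k), 𝒩 j := by
    simpa using sub_mem hsum hrest
  exact AddSubgroup.disjoint_def.mp (iSupIndep_def.mp h𝒩 (a k)) (hx k) hxk

theorem DirectSum.IsInternal.addMonoidHom_apply_eq_zero {M P : Type} [DecidableEq ι]
    [AddCommGroup M] [AddCommGroup P] {ℳ : ι → AddSubgroup M} (hℳ : DirectSum.IsInternal ℳ)
    {φ : M →+ P} (hφ : ∀ i, ∀ m ∈ ℳ i, φ m = 0) (m : M) : φ m = 0 := by
  have hker : ⨆ i, (ℳ i).toAddSubmonoid ≤ φ.ker.toAddSubmonoid := iSup_le hφ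
  exact hker ((DirectSum.IsInternal.addSubmonoid_iSup_eq_top _ hℳ).symm ▸ trivial)

end SumOfComponents

theorem factors_through_finite_subsum_of_gradedHom_coarsening_iso_general
    {G H R M N : Type} [AddCommGroup G] [AddCommGroup H] [CommRing R]
    [AddCommGroup M] [Module R M] [AddCommGroup N] [Module R N]
    (ψ : G →+ H)
    (𝒜 : G → AddSubgroup R)
    (ℳ : G → AddSubgroup M) (hℳ : IsGradedModule 𝒜 ℳ)
    (𝒩 : G → AddSubgroup N) (h𝒩 : IsGradedModule 𝒜 𝒩)
    (hiso : (⨆ g : G, gradedHomSubgroup (R := R) ℳ 𝒩 g)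
      = ⨆ h : H, gradedHomSubgroup (R := R) (coarsen ψ ℳ) (coarsen ψ 𝒩) h) :
    ∀ f : M →ₗ[R] ⨁ (_ : ψ.ker), N,
      IsGradedHom ℳ (directSumGrading fun (k : ψ.ker) (h : G) => 𝒩 ((k : G) + h)) f →
        ∃ s : Finset ψ.ker, ∀ (m : M) (k : ψ.ker), k ∉ s → f m k = 0 := by
  classical
  intro f hf
  set u := DirectSum.toModule R ψ.ker N (fun _ => LinearMap.id) ∘ₗ f
  have hu : u ∈ gradedHomSubgroup (coarsen ψ ℳ) (coarsen ψ 𝒩) 0 :=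
    mem_gradedHomSubgroup_coarsen ψ ℳ 𝒩 fun g m hm =>
      DirectSum.toModule_id_mem fun k => by
        simpa [ψ.mem_ker.mp k.2] using le_coarsen ψ 𝒩 (k + g) (hf g m hm k)
  obtain ⟨S, hS⟩ := exists_finset_of_mem_iSup_gradedHomSubgroup ℳ 𝒩
    (hiso ▸ AddSubgroup.mem_iSup_of_mem 0 hu)
  refine ⟨S.preimage Subtype.val Subtype.val_injective.injOn, fun m k hk => ?_⟩
  refine hℳ.2.addMonoidHom_apply_eq_zero
    (φ := (DFinsupp.evalAddMonoidHom k).comp f.toAddMonoidHom) (fun g m hm => ?_) m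
  have hS_avoids : ⨆ g' ∈ S, 𝒩 (g' + g) ≤ ⨆ (j) (_ : j ≠ (k : G) + g), 𝒩 j :=
    iSup₂_le fun g' hg' => le_iSup₂ (f := fun j (_ : j ≠ (k : G) + g) => 𝒩 j) (g' + g)
      fun hg'k => hk (by simpa [add_right_cancel hg'k] using hg')
  exact DirectSum.apply_eq_zero_of_toModule_id_mem_iSup_ne (R := R) h𝒩.2.addSubgroup_iSupIndep
    ((add_left_injective g).comp Subtype.val_injective) (hf g m hm) (hS_avoids (hS g m hm))

/-- **Statement 15** (Lemma 2.60): if the canonical monomorphism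
`h_ψ(M,N) : (⨁HOM^G_R(M,N))_[ψ] → ⨁HOM^H_{R_[ψ]}(M_[ψ], N_[ψ])` is an isomorphism —
expressed here as the equality of the corresponding subgroups of `M →ₗ[R] N`, i.e.
`⨆_{g : G} Hom(M, N(g)) = ⨆_{h : H} Hom(M_[ψ], N_[ψ](h))` — then `λ^M_{ker ψ}` is an
isomorphism, i.e. every graded morphism `M → ⨁_{g ∈ ker ψ} N(g)` factors through a finite
sub-sum. -/
theorem factors_through_finite_subsum_of_gradedHom_coarsening_iso
    {G H R M N : Type} [AddCommGroup G] [AddCommGroup H] [CommRing R]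
    [AddCommGroup M] [Module R M] [AddCommGroup N] [Module R N]
    (ψ : G →+ H) (hψ : Function.Surjective ψ)
    (𝒜 : G → AddSubgroup R) (h𝒜 : IsGradedRing 𝒜)
    (ℳ : G → AddSubgroup M) (hℳ : IsGradedModule 𝒜 ℳ)
    (𝒩 : G → AddSubgroup N) (h𝒩 : IsGradedModule 𝒜 𝒩)
    (hiso : (⨆ g : G, gradedHomSubgroup (R := R) ℳ 𝒩 g)
      = ⨆ h : H, gradedHomSubgroup (R := R) (coarsen ψ ℳ) (coarsen ψ 𝒩) h) :
    ∀ f : M →ₗ[R] ⨁ (_ : ψ.ker), N,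
      IsGradedHom ℳ (directSumGrading fun (k : ψ.ker) (h : G) => 𝒩 ((k : G) + h)) f →
        ∃ s : Finset ψ.ker, ∀ (m : M) (k : ψ.ker), k ∉ s → f m k = 0 :=
  factors_through_finite_subsum_of_gradedHom_coarsening_iso_general ψ 𝒜 ℳ hℳ 𝒩 h𝒩 hiso
end
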